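/- arXiv:2307.10841 — 4 statements merged into one kernel-verified Lean document; each statement's English description precedes it below -/
import Mathlib

section
/- In the simple kriging setup, the kriging weights of the second stage satisfy the update formulae W₁ = W₁₀ - Σ₂₀ᵀ Σ₂⁻¹ W₁₂ and W₂ = Σ₂₀ᵀ Σ₂⁻¹, where W₁₂ = C₁₂ᵀ C₁⁻¹, W₁₀ = C₁₀ᵀ C₁⁻¹, Σ₂ = C₂ - C₁₂ᵀ C₁⁻¹ C₁₂, Σ₂₀ = C₂₀ - C₁₂ᵀ C₁⁻¹ C₁₀. Explicitly, (W₁ W₂) equals (C₁₀ᵀ C₂₀ᵀ) times the inverse of the full block covariance matrix [[C₁, C₁₂],[C₁₂ᵀ, C₂]]. -/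
/-!
Eliminating the first block of unknowns from the simple-kriging system `W C = (C₁₀ᵀ C₂₀ᵀ)`
is block Gaussian elimination: the inverse of `[[C₁, C₁₂], [C₁₂ᵀ, C₂]]` is written through the
Schur complement `Σ₂ = C₂ - C₁₂ᵀ C₁⁻¹ C₁₂`, and multiplying the right-hand side into it block by
block gives `W₂ = (C₂₀ᵀ - C₁₀ᵀ C₁⁻¹ C₁₂) Σ₂⁻¹` and `W₁ = C₁₀ᵀ C₁⁻¹ - W₂ C₁₂ᵀ C₁⁻¹`. The symmetry of
`C₁⁻¹` identifies `C₂₀ᵀ - C₁₀ᵀ C₁⁻¹ C₁₂` with `Σ₂₀ᵀ`.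
-/

open Matrix

namespace Matrix

variable {m n o R : Type*} [Fintype m] [Fintype n] [DecidableEq m] [DecidableEq n] [CommRing R]

theorem inv_fromBlocks_eq_of_isUnit₁₁ {A : Matrix m m R} (B : Matrix m n R)
    (C : Matrix n m R) (D : Matrix n n R) (hA : IsUnit A)
    (hABCD : IsUnit (fromBlocks A B C D)) :
    (fromBlocks A B C D)⁻¹ =
      fromBlocks (A⁻¹ + A⁻¹ * B * (D - C * A⁻¹ * B)⁻¹ * C * A⁻¹)
        (-(A⁻¹ * B * (D - C * A⁻¹ * B)⁻¹)) (-((D - C * A⁻¹ * B)⁻¹ * C * A⁻¹))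
        (D - C * A⁻¹ * B)⁻¹ := by
  let := hA.invertible
  let := hABCD.invertible
  let := invertibleOfFromBlocks₁₁Invertible A B C D
  simp only [← invOf_eq_nonsing_inv, invOf_fromBlocks₁₁_eq]

theorem fromCols_mul_inv_fromBlocks_eq_of_isUnit₁₁ {A : Matrix m m R} (B : Matrix m n R)
    (C : Matrix n m R) (D : Matrix n n R) (X : Matrix o m R) (Y : Matrix o n R)
    (hA : IsUnit A) (hABCD : IsUnit (fromBlocks A B C D)) :
    fromCols X Y * (fromBlocks A B C D)⁻¹ =
      fromCols (X * A⁻¹ - (Y - X * A⁻¹ * B) * (D - C * A⁻¹ * B)⁻¹ * (C * A⁻¹))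
        ((Y - X * A⁻¹ * B) * (D - C * A⁻¹ * B)⁻¹) := by
  rw [inv_fromBlocks_eq_of_isUnit₁₁ B C D hA hABCD, fromCols_mul_fromBlocks]
  congr 1 <;>
  · simp only [Matrix.sub_mul, Matrix.mul_add, Matrix.mul_neg, Matrix.mul_assoc]
    abel

end Matrix

theorem simple_kriging_weight_update {k l m : ℕ}
    (C₁ : Matrix (Fin k) (Fin k) ℝ) (C₂ : Matrix (Fin l) (Fin l) ℝ)
    (C₁₂ : Matrix (Fin k) (Fin l) ℝ) (C₁₀ : Matrix (Fin k) (Fin m) ℝ)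
    (C₂₀ : Matrix (Fin l) (Fin m) ℝ)
    (hC₁ : C₁.PosDef)
    (hPD : (Matrix.fromBlocks C₁ C₁₂ C₁₂ᵀ C₂).PosDef) :
    let W₁₂ := C₁₂ᵀ * C₁⁻¹
    let W₁₀ := C₁₀ᵀ * C₁⁻¹
    let Sig₂ := C₂ - C₁₂ᵀ * C₁⁻¹ * C₁₂
    let Sig₂₀ := C₂₀ - C₁₂ᵀ * C₁⁻¹ * C₁₀
    let W₂ := Sig₂₀ᵀ * Sig₂⁻¹
    let W₁ := W₁₀ - W₂ * W₁₂
    Matrix.fromCols W₁ W₂ =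
      Matrix.fromCols C₁₀ᵀ C₂₀ᵀ * (Matrix.fromBlocks C₁ C₁₂ C₁₂ᵀ C₂)⁻¹ := by
  intro W₁₂ W₁₀ Sig₂ Sig₂₀ W₂ W₁
  have hC₁inv_symm : C₁⁻¹ᵀ = C₁⁻¹ := (isHermitian_iff_isSymm.1 hC₁.isHermitian).inv.eq
  have hSig₂₀ : Sig₂₀ᵀ = C₂₀ᵀ - C₁₀ᵀ * C₁⁻¹ * C₁₂ := by
    simp only [Sig₂₀, transpose_sub, transpose_mul, transpose_transpose, hC₁inv_symm,
      Matrix.mul_assoc]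
  rw [fromCols_mul_inv_fromBlocks_eq_of_isUnit₁₁ C₁₂ C₁₂ᵀ C₂ C₁₀ᵀ C₂₀ᵀ
    hC₁.isUnit hPD.isUnit, ← hSig₂₀]
end

section
/- With the universal kriging weight matrix W = F₀ B + C_{ξ0}ᵀ A (B, A as in the GLS construction), the kriging covariance matrix Cov(Ŷ₀ - Y₀) = W C_ξ Wᵀ - W C_{ξ0} - C_{ξ0}ᵀ Wᵀ + C₀ equals C₀ - C_{ξ0}ᵀ C_ξ⁻¹ C_{ξ0} + (F₀ - C_{ξ0}ᵀ C_ξ⁻¹ F_ξ)(F_ξᵀ C_ξ⁻¹ F_ξ)⁻¹ (F₀ - C_{ξ0}ᵀ C_ξ⁻¹ F_ξ)ᵀ. -/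
open Matrix

set_option maxHeartbeats 1000000

theorem universal_kriging_covariance {k p m : ℕ}
    (Cξ : Matrix (Fin k) (Fin k) ℝ) (Cξ0 : Matrix (Fin k) (Fin m) ℝ)
    (C₀ : Matrix (Fin m) (Fin m) ℝ)
    (Fξ : Matrix (Fin k) (Fin p) ℝ) (F₀ : Matrix (Fin m) (Fin p) ℝ)
    (hCξ : Cξ.PosDef) (hM : IsUnit (Fξᵀ * Cξ⁻¹ * Fξ).det) :
    let B := (Fξᵀ * Cξ⁻¹ * Fξ)⁻¹ * Fξᵀ * Cξ⁻¹
    let A := Cξ⁻¹ * (1 - Fξ * B)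
    let W := F₀ * B + Cξ0ᵀ * A
    W * Cξ * Wᵀ - W * Cξ0 - Cξ0ᵀ * Wᵀ + C₀
      = C₀ - Cξ0ᵀ * Cξ⁻¹ * Cξ0
        + (F₀ - Cξ0ᵀ * Cξ⁻¹ * Fξ) * (Fξᵀ * Cξ⁻¹ * Fξ)⁻¹
          * (F₀ - Cξ0ᵀ * Cξ⁻¹ * Fξ)ᵀ := by
  intro B A W
  have hC : IsUnit Cξ.det := isUnit_iff_ne_zero.mpr (ne_of_gt hCξ.det_pos)
  have hCs : Cξᵀ = Cξ := by
    have := hCξ.1.eq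
    simpa using this
  have hGs : (Cξ⁻¹)ᵀ = Cξ⁻¹ := by rw [transpose_nonsing_inv, hCs]
  have hGC : Cξ⁻¹ * Cξ = 1 := nonsing_inv_mul _ hC
  have hCG : Cξ * Cξ⁻¹ = 1 := mul_nonsing_inv _ hC
  have hMs : (Fξᵀ * Cξ⁻¹ * Fξ)ᵀ = Fξᵀ * Cξ⁻¹ * Fξ := by
    simp [transpose_mul, hGs, Matrix.mul_assoc]
  have hNs : ((Fξᵀ * Cξ⁻¹ * Fξ)⁻¹)ᵀ = (Fξᵀ * Cξ⁻¹ * Fξ)⁻¹ := by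
    rw [transpose_nonsing_inv, hMs]
  have hNM : (Fξᵀ * Cξ⁻¹ * Fξ)⁻¹ * (Fξᵀ * Cξ⁻¹ * Fξ) = 1 := nonsing_inv_mul _ hM
  have hMN : (Fξᵀ * Cξ⁻¹ * Fξ) * (Fξᵀ * Cξ⁻¹ * Fξ)⁻¹ = 1 := mul_nonsing_inv _ hM
  have hGC' : ∀ {n} (X : Matrix (Fin k) (Fin n) ℝ), Cξ⁻¹ * (Cξ * X) = X := by
    intro n X; rw [← Matrix.mul_assoc, hGC, Matrix.one_mul]
  have hCG' : ∀ {n} (X : Matrix (Fin k) (Fin n) ℝ), Cξ * (Cξ⁻¹ * X) = X := by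
    intro n X; rw [← Matrix.mul_assoc, hCG, Matrix.one_mul]
  have hNM' : ∀ {n} (X : Matrix (Fin p) (Fin n) ℝ),
      (Fξᵀ * Cξ⁻¹ * Fξ)⁻¹ * (Fξᵀ * (Cξ⁻¹ * (Fξ * X))) = X := by
    intro n X
    rw [show (Fξᵀ * Cξ⁻¹ * Fξ)⁻¹ * (Fξᵀ * (Cξ⁻¹ * (Fξ * X)))
        = ((Fξᵀ * Cξ⁻¹ * Fξ)⁻¹ * (Fξᵀ * Cξ⁻¹ * Fξ)) * X from by
      simp [Matrix.mul_assoc], hNM, Matrix.one_mul]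
  have hMN' : ∀ {n} (X : Matrix (Fin p) (Fin n) ℝ),
      Fξᵀ * (Cξ⁻¹ * (Fξ * ((Fξᵀ * Cξ⁻¹ * Fξ)⁻¹ * X))) = X := by
    intro n X
    rw [show Fξᵀ * (Cξ⁻¹ * (Fξ * ((Fξᵀ * Cξ⁻¹ * Fξ)⁻¹ * X)))
        = ((Fξᵀ * Cξ⁻¹ * Fξ) * (Fξᵀ * Cξ⁻¹ * Fξ)⁻¹) * X from by
      simp [Matrix.mul_assoc], hMN, Matrix.one_mul]
  have hMN'' : Fξᵀ * (Cξ⁻¹ * (Fξ * (Fξᵀ * Cξ⁻¹ * Fξ)⁻¹)) = 1 := by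
    rw [show Fξᵀ * (Cξ⁻¹ * (Fξ * (Fξᵀ * Cξ⁻¹ * Fξ)⁻¹))
        = (Fξᵀ * Cξ⁻¹ * Fξ) * (Fξᵀ * Cξ⁻¹ * Fξ)⁻¹ from by
      simp [Matrix.mul_assoc], hMN]
  simp only [W, A, B]
  set N := (Fξᵀ * Cξ⁻¹ * Fξ)⁻¹ with hNdef
  simp only [Matrix.mul_sub, Matrix.sub_mul, Matrix.mul_add, Matrix.add_mul,
    Matrix.mul_one, Matrix.one_mul, transpose_add, transpose_sub, transpose_mul,
    transpose_one, transpose_transpose, hGs, hNs, Matrix.mul_assoc,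
    hGC', hCG', hNM', hMN', hMN'']
  abel
end

section
/- For ordinary kriging with weight matrix W = (1/b)·𝟙_m 𝟙_kᵀ C_ξ⁻¹ + C_{ξ0}ᵀ C_ξ⁻¹ (I_k - (1/b)·𝟙_k 𝟙_kᵀ C_ξ⁻¹) where b = 𝟙_kᵀ C_ξ⁻¹ 𝟙_k, the kriging covariance matrix W C_ξ Wᵀ - W C_{ξ0} - C_{ξ0}ᵀ Wᵀ + C₀ equals C₀ - C_{ξ0}ᵀ C_ξ⁻¹ C_{ξ0} + (1/b)(𝟙_m - C_{ξ0}ᵀ C_ξ⁻¹ 𝟙_k)(𝟙_m - C_{ξ0}ᵀ C_ξ⁻¹ 𝟙_k)ᵀ. -/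
/-!
Completing the square with respect to `Cξ` writes the covariance of any weight matrix `W` as
`C₀ - Cξ0ᵀ Cξ⁻¹ Cξ0 + (W - Cξ0ᵀ Cξ⁻¹) Cξ (W - Cξ0ᵀ Cξ⁻¹)ᵀ`. For the ordinary-kriging weight the
deviation from the simple-kriging weight `Cξ0ᵀ Cξ⁻¹` is the rank-one matrix
`(1/b) r 𝟙_kᵀ Cξ⁻¹` with `r = 𝟙_m - Cξ0ᵀ Cξ⁻¹ 𝟙_k`, whose quadratic form in `Cξ` collapses,
via `𝟙_kᵀ Cξ⁻¹ 𝟙_k = b`, to the correction term `(1/b) r rᵀ`.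
-/

open Matrix

namespace Matrix

variable {n p q R : Type*} [Fintype n] [DecidableEq n] [Fintype q] [CommRing R]

theorem mul_mul_transpose_sub_sub_eq {C : Matrix n n R} (hC : C.IsSymm) (hdet : IsUnit C.det)
    (W : Matrix p n R) (D : Matrix n p R) :
    W * C * Wᵀ - W * D - Dᵀ * Wᵀ
      = (W - Dᵀ * C⁻¹) * C * (W - Dᵀ * C⁻¹)ᵀ - Dᵀ * C⁻¹ * D := by
  have hinv : C⁻¹ᵀ = C⁻¹ := hC.inv
  simp only [transpose_sub, transpose_mul, transpose_transpose, hinv, Matrix.sub_mul,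
    Matrix.mul_sub, Matrix.mul_assoc, mul_nonsing_inv_cancel_left _ _ hdet,
    nonsing_inv_mul_cancel_left _ _ hdet]
  abel

theorem smul_mul_mul_transpose_smul [DecidableEq q] {P C : Matrix n n R} (hP : P.IsSymm)
    (hPC : P * C = 1) {u : Matrix n q R} {b : R} (hu : uᵀ * P * u = b • 1)
    (r : Matrix p q R) (s : R) :
    s • (r * uᵀ * P) * C * (s • (r * uᵀ * P))ᵀ = (s * s * b) • (r * rᵀ) := by
  have hPt : Pᵀ = P := hP
  calc s • (r * uᵀ * P) * C * (s • (r * uᵀ * P))ᵀ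
      = (s * s) • (r * (uᵀ * (P * C) * P * u) * rᵀ) := by
        simp only [transpose_smul, transpose_mul, transpose_transpose, hPt, Matrix.smul_mul,
          Matrix.mul_smul, smul_smul, Matrix.mul_assoc]
    _ = (s * s * b) • (r * rᵀ) := by
        rw [hPC, Matrix.mul_one, hu, Matrix.mul_smul, Matrix.mul_one, Matrix.smul_mul, smul_smul]

end Matrix

/-- With `P = Cξ⁻¹` and `s = 1 / b`, the left side is the ordinary-kriging weight minus the
simple-kriging weight `Dᵀ P`. -/
theorem ordinaryKrigingWeight_sub_simpleKrigingWeight {k m n R : Type*} [Fintype k]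
    [DecidableEq k] [Fintype n] [CommRing R] (s : R)
    (P : Matrix k k R) (D : Matrix k m R) (onek : Matrix k n R) (onem : Matrix m n R) :
    s • (onem * onekᵀ * P) + Dᵀ * P * (1 - s • (onek * onekᵀ * P)) - Dᵀ * P
      = s • ((onem - Dᵀ * P * onek) * onekᵀ * P) := by
  simp only [Matrix.mul_sub, Matrix.sub_mul, Matrix.mul_one, Matrix.mul_smul, smul_sub,
    Matrix.mul_assoc]
  abel

theorem ordinary_kriging_covariance {k m : ℕ}
    (Cξ : Matrix (Fin k) (Fin k) ℝ) (Cξ0 : Matrix (Fin k) (Fin m) ℝ)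
    (C₀ : Matrix (Fin m) (Fin m) ℝ) (hCξ : Cξ.PosDef) :
    let onek : Matrix (Fin k) (Fin 1) ℝ := Matrix.of fun _ _ => 1
    let onem : Matrix (Fin m) (Fin 1) ℝ := Matrix.of fun _ _ => 1
    let b : ℝ := (onekᵀ * Cξ⁻¹ * onek) 0 0
    let W := (1 / b) • (onem * onekᵀ * Cξ⁻¹)
      + Cξ0ᵀ * Cξ⁻¹ * (1 - (1 / b) • (onek * onekᵀ * Cξ⁻¹))
    b > 0 →
    W * Cξ * Wᵀ - W * Cξ0 - Cξ0ᵀ * Wᵀ + C₀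
      = C₀ - Cξ0ᵀ * Cξ⁻¹ * Cξ0
        + (1 / b) • ((onem - Cξ0ᵀ * Cξ⁻¹ * onek) * (onem - Cξ0ᵀ * Cξ⁻¹ * onek)ᵀ) := by
  intro onek onem b W _
  have hdet : IsUnit Cξ.det := (isUnit_iff_isUnit_det Cξ).mp hCξ.isUnit
  have hsymm : Cξ.IsSymm := isHermitian_iff_isSymm.mp hCξ.isHermitian
  have hb1 : onekᵀ * Cξ⁻¹ * onek = b • 1 := by
    ext i j
    fin_cases i; fin_cases j
    simp [b]
  have hscalar : 1 / b * (1 / b) * b = 1 / b := by field_simp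
  rw [Matrix.mul_mul_transpose_sub_sub_eq hsymm hdet,
    ordinaryKrigingWeight_sub_simpleKrigingWeight,
    Matrix.smul_mul_mul_transpose_smul hsymm.inv (nonsing_inv_mul _ hdet) hb1, hscalar]
  abel
end

section
/- In the universal kriging setting, the second-stage weight matrix computed directly, W₂ = (C₂₀ᵀ - C₁₀ᵀC₁⁻¹C₁₂)S⁻¹ + (F₀ - C₁₀ᵀC₁⁻¹F₁ - (C₂₀ᵀ - C₁₀ᵀC₁⁻¹C₁₂)S⁻¹G)·(M + GᵀS⁻¹G)⁻¹·GᵀS⁻¹, equals the updated weight matrix Σ₂₀ᵀΣ₂⁻¹ where Σ₂ = S + G M⁻¹ Gᵀ and Σ₂₀ᵀ = (C₂₀ᵀ - C₁₀ᵀC₁⁻¹C₁₂) + (F₀ - C₁₀ᵀC₁⁻¹F₁)M⁻¹Gᵀ, with S = C₂ - C₁₂ᵀC₁⁻¹C₁₂, G = F₂ - C₁₂ᵀC₁⁻¹F₁, M = F₁ᵀC₁⁻¹F₁. -/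
open Matrix

theorem universal_kriging_W2_identity {k l m p : ℕ}
    (C₁ : Matrix (Fin k) (Fin k) ℝ) (C₂ : Matrix (Fin l) (Fin l) ℝ)
    (C₁₂ : Matrix (Fin k) (Fin l) ℝ) (C₁₀ : Matrix (Fin k) (Fin m) ℝ)
    (C₂₀ : Matrix (Fin l) (Fin m) ℝ)
    (F₁ : Matrix (Fin k) (Fin p) ℝ) (F₂ : Matrix (Fin l) (Fin p) ℝ)
    (F₀ : Matrix (Fin m) (Fin p) ℝ)
    (hC₁ : C₁.PosDef) :
    let S := C₂ - C₁₂ᵀ * C₁⁻¹ * C₁₂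
    let G := F₂ - C₁₂ᵀ * C₁⁻¹ * F₁
    let M := F₁ᵀ * C₁⁻¹ * F₁
    let Sig₂ := S + G * M⁻¹ * Gᵀ
    let Sig₂₀T := (C₂₀ᵀ - C₁₀ᵀ * C₁⁻¹ * C₁₂) + (F₀ - C₁₀ᵀ * C₁⁻¹ * F₁) * M⁻¹ * Gᵀ
    IsUnit S.det → IsUnit M.det → IsUnit Sig₂.det →
    IsUnit (M + Gᵀ * S⁻¹ * G).det →
    (C₂₀ᵀ - C₁₀ᵀ * C₁⁻¹ * C₁₂) * S⁻¹
      + (F₀ - C₁₀ᵀ * C₁⁻¹ * F₁ - (C₂₀ᵀ - C₁₀ᵀ * C₁⁻¹ * C₁₂) * S⁻¹ * G)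
        * (M + Gᵀ * S⁻¹ * G)⁻¹ * Gᵀ * S⁻¹
      = Sig₂₀T * Sig₂⁻¹ := by
  intro S G M Sig₂ Sig₂₀T hS hM hSg hN
  set A := C₂₀ᵀ - C₁₀ᵀ * C₁⁻¹ * C₁₂ with hA
  set B := F₀ - C₁₀ᵀ * C₁⁻¹ * F₁ with hB
  set N := M + Gᵀ * S⁻¹ * G with hNdef
  have hSinv : S⁻¹ * S = 1 := Matrix.nonsing_inv_mul _ hS
  have hMinv : M * M⁻¹ = 1 := Matrix.mul_nonsing_inv _ hM
  have hNinv : N⁻¹ * N = 1 := Matrix.nonsing_inv_mul _ hN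
  have hSig2 : Sig₂ * Sig₂⁻¹ = 1 := Matrix.mul_nonsing_inv _ hSg
  have hT : Sig₂₀T = A + B * M⁻¹ * Gᵀ := rfl
  have h3 : S⁻¹ * Sig₂ = 1 + S⁻¹ * (G * (M⁻¹ * Gᵀ)) := by
    show S⁻¹ * (S + G * M⁻¹ * Gᵀ) = _
    rw [Matrix.mul_add, hSinv]
    simp only [Matrix.mul_assoc]
  have h2 : Gᵀ * (S⁻¹ * Sig₂) = N * (M⁻¹ * Gᵀ) := by
    rw [h3, hNdef, Matrix.mul_add, Matrix.mul_one, Matrix.add_mul,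
      ← Matrix.mul_assoc M M⁻¹ Gᵀ, hMinv, Matrix.one_mul]
    simp only [Matrix.mul_assoc]
  have h4 : N⁻¹ * (Gᵀ * (S⁻¹ * Sig₂)) = M⁻¹ * Gᵀ := by
    rw [h2, ← Matrix.mul_assoc, hNinv, Matrix.one_mul]
  clear_value A B N S G M Sig₂ Sig₂₀T
  rw [hT]
  have key : (A * S⁻¹ + (B - A * S⁻¹ * G) * N⁻¹ * Gᵀ * S⁻¹) * Sig₂
      = A + B * M⁻¹ * Gᵀ := by
    simp only [Matrix.add_mul, Matrix.mul_assoc]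
    rw [h4, h3]
    simp only [Matrix.mul_add, Matrix.mul_one, Matrix.sub_mul, Matrix.mul_assoc]
    abel
  rw [← key, Matrix.mul_assoc _ Sig₂ Sig₂⁻¹, hSig2, Matrix.mul_one]
end
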